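/- arXiv:2407.20896 — 8 statements merged into one kernel-verified Lean document; each statement's English description precedes it below -/
import Mathlib

section
/- Let K be a field of characteristic zero. For x, y, z ∈ K set F1 = 5x^3 − x y^2 + 8x^2 z, F2 = 5x^2 y − y^3 + 8x y z, F3 = −2x^3 − 5x^2 z + y^2 z, and let H1, H2, H3 be obtained from F1, F2, F3 by substituting (F1, F2, F3) for (x, y, z). Then for all x, y, z ∈ K: H1·y = H2·x, H1·z = H3·x, and H2·z = H3·y. (Equivalently, the cubic involution ι_q composed with itself is the identity as a rational self-map of the projective plane.) -/
namespace Stmt0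

/-- First component of the cubic involution `ι_q`. -/
def F1 {K : Type*} [Field K] (x y z : K) : K := 5 * x ^ 3 - x * y ^ 2 + 8 * x ^ 2 * z

/-- Second component of the cubic involution `ι_q`. -/
def F2 {K : Type*} [Field K] (x y z : K) : K := 5 * x ^ 2 * y - y ^ 3 + 8 * x * y * z

/-- Third component of the cubic involution `ι_q`. -/
def F3 {K : Type*} [Field K] (x y z : K) : K := -2 * x ^ 3 - 5 * x ^ 2 * z + y ^ 2 * z

/-- The cubic involution `ι_q` composed with itself is the identity as a rational self-map of
the projective plane: the result `(H1, H2, H3)` of substituting `(F1, F2, F3)` into `(F1, F2, F3)`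
is projectively proportional to `(x, y, z)`. -/
theorem iota_q_is_involution {K : Type*} [Field K] [CharZero K] (x y z : K) :
    F1 (F1 x y z) (F2 x y z) (F3 x y z) * y = F2 (F1 x y z) (F2 x y z) (F3 x y z) * x ∧
    F1 (F1 x y z) (F2 x y z) (F3 x y z) * z = F3 (F1 x y z) (F2 x y z) (F3 x y z) * x ∧
    F2 (F1 x y z) (F2 x y z) (F3 x y z) * z = F3 (F1 x y z) (F2 x y z) (F3 x y z) * y := by
  refine ⟨?_, ?_, ?_⟩ <;> simp only [F1, F2, F3] <;> ring

end Stmt0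
end

section
/- Let K be a field with characteristic different from 2 and let α1, α2 ∈ K be nonzero and distinct, so that W : y^2 = x(x − α1)(x − α2) is an elliptic curve over K. Let P = (x, y) and Q = (a, b) be affine points of W(K). Then x^4 − 4a x^3 + 4(α1 + α2) a x^2 − 2 α1 α2 x^2 − 4 α1 α2 a x + α1^2 α2^2 = 0 if and only if 2P = Q or 2P = −Q in the group W(K). -/
/-!
On `W` we have `y² = x(x - α₁)(x - α₂)`, so the quartic equals `(x² - α₁α₂)² - 4ay²`, while the
duplication formula reads `x(2P) = (x² - α₁α₂)² / (2y)²`. Hence for `y ≠ 0` the quartic is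
`(2y)² (x(2P) - a)`, and two affine points share their `x`-coordinate exactly when they are equal
or opposite. For `y = 0` the point `P` is `2`-torsion, so `2P = 0` is not affine, while
`x ∈ {0, α₁, α₂}` forces `x² ≠ α₁α₂`, so the quartic does not vanish.
-/

namespace Stmt8

/-- The Weierstrass curve `W : y² = x(x - α₁)(x - α₂) = x³ - (α₁ + α₂)x² + α₁α₂x` over `K`. -/
def W {K : Type*} [Field K] (α₁ α₂ : K) : WeierstrassCurve.Affine K :=
  { a₁ := 0, a₂ := -(α₁ + α₂), a₃ := 0, a₄ := α₁ * α₂, a₆ := 0 }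

open WeierstrassCurve.Affine

section Curve

variable {K : Type*} [Field K] {α₁ α₂ : K}

lemma W_equation_iff {x y : K} : (W α₁ α₂).Equation x y ↔ y ^ 2 = x * (x - α₁) * (x - α₂) := by
  rw [equation_iff]
  simp only [W]
  constructor <;> intro h <;> linear_combination h

lemma W_negY (x y : K) : (W α₁ α₂).negY x y = -y := by
  simp [negY, W]

lemma W_Y_eq_negY_iff {x y : K} : y = (W α₁ α₂).negY x y ↔ 2 * y = 0 := by
  rw [W_negY]
  constructor <;> intro h <;> linear_combination h

lemma W_sq_mul_addX_self [DecidableEq K] {x y : K} (hP : (W α₁ α₂).Equation x y)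
    (hy : y ≠ (W α₁ α₂).negY x y) :
    (2 * y) ^ 2 * (W α₁ α₂).addX x x ((W α₁ α₂).slope x x y y) = (x ^ 2 - α₁ * α₂) ^ 2 := by
  have hL : (W α₁ α₂).slope x x y y * (2 * y) = 3 * x ^ 2 - 2 * (α₁ + α₂) * x + α₁ * α₂ := by
    rw [slope_of_Y_ne rfl hy, div_mul_eq_mul_div, div_eq_iff (sub_ne_zero.mpr hy), W_negY]
    simp only [W]
    ring
  set L := (W α₁ α₂).slope x x y y
  rw [addX]
  simp only [W]
  linear_combination (L * (2 * y) + 3 * x ^ 2 - 2 * (α₁ + α₂) * x + α₁ * α₂) * hL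
    + 4 * (α₁ + α₂ - 2 * x) * W_equation_iff.mp hP

lemma sq_ne_mul_of_mul_sub_mul_sub_eq_zero {x : K}
    (hα₁ : α₁ ≠ 0) (hα₂ : α₂ ≠ 0) (hne : α₁ ≠ α₂) (hx : x * (x - α₁) * (x - α₂) = 0) :
    x ^ 2 ≠ α₁ * α₂ := by
  intro hsq
  rcases mul_eq_zero.mp hx with hx | hx
  · rcases mul_eq_zero.mp hx with rfl | hx
    · exact mul_ne_zero hα₁ hα₂ (by linear_combination -hsq)
    · obtain rfl := sub_eq_zero.mp hx
      exact hne (mul_left_cancel₀ hα₁ (by linear_combination hsq))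
  · obtain rfl := sub_eq_zero.mp hx
    exact hne (mul_right_cancel₀ hα₂ (by linear_combination -hsq))

lemma quartic_eq_sq_sub_four_mul_cubic (a x : K) :
    x ^ 4 - 4 * a * x ^ 3 + 4 * (α₁ + α₂) * a * x ^ 2 - 2 * (α₁ * α₂) * x ^ 2
        - 4 * (α₁ * α₂) * a * x + α₁ ^ 2 * α₂ ^ 2 =
      (x ^ 2 - α₁ * α₂) ^ 2 - 4 * a * (x * (x - α₁) * (x - α₂)) := by
  ring

end Curve

open Classical in
/-- For the elliptic curve `W : y² = x(x - α₁)(x - α₂)` over a field of characteristic `≠ 2`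
with `α₁, α₂` nonzero and distinct, and affine points `P = (x, y)`, `Q = (a, b)` of `W(K)`, the
quartic `x⁴ - 4ax³ + 4(α₁ + α₂)ax² - 2α₁α₂x² - 4α₁α₂ax + α₁²α₂²` vanishes if and only if
`2P = Q` or `2P = -Q` in the group `W(K)`. -/
theorem quartic_characterizes_halves_of_Q {K : Type*} [Field K]
    (hchar : (ringChar K) ≠ 2)
    (α₁ α₂ : K) (hα₁ : α₁ ≠ 0) (hα₂ : α₂ ≠ 0) (hne : α₁ ≠ α₂)
    (x y a b : K)
    (hP : (W α₁ α₂).Nonsingular x y) (hQ : (W α₁ α₂).Nonsingular a b) :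
    x ^ 4 - 4 * a * x ^ 3 + 4 * (α₁ + α₂) * a * x ^ 2 - 2 * (α₁ * α₂) * x ^ 2
        - 4 * (α₁ * α₂) * a * x + α₁ ^ 2 * α₂ ^ 2 = 0 ↔
      ((2 : ℕ) • WeierstrassCurve.Affine.Point.some _ _ hP =
          WeierstrassCurve.Affine.Point.some _ _ hQ ∨
       (2 : ℕ) • WeierstrassCurve.Affine.Point.some _ _ hP =
          -WeierstrassCurve.Affine.Point.some _ _ hQ) := by
  have hcurve := W_equation_iff.mp hP.1
  rw [quartic_eq_sq_sub_four_mul_cubic, ← hcurve, two_nsmul]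
  by_cases hy : y = (W α₁ α₂).negY x y
  · have hy0 : y = 0 :=
      (mul_eq_zero.mp (W_Y_eq_negY_iff.mp hy)).resolve_left (Ring.two_ne_zero hchar)
    have hx : x * (x - α₁) * (x - α₂) = 0 := by rw [← hcurve, hy0, zero_pow two_ne_zero]
    rw [Point.add_self_of_Y_eq hy]
    refine iff_of_false ?_ ?_
    · simpa [hy0] using sub_ne_zero.mpr (sq_ne_mul_of_mul_sub_mul_sub_eq_zero hα₁ hα₂ hne hx)
    · simp
  · have h2y : (2 * y) ^ 2 ≠ 0 := pow_ne_zero 2 (W_Y_eq_negY_iff.not.mp hy)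
    rw [Point.add_self_of_Y_ne hy, ← Point.X_eq_iff, ← W_sq_mul_addX_self hP.1 hy,
      show 4 * a * y ^ 2 = (2 * y) ^ 2 * a by ring, ← mul_sub, mul_eq_zero, sub_eq_zero,
      or_iff_right h2y]

end Stmt8
end

section
/- Let A = M_ψ · M_φ be the product of the two explicit 11×11 rational matrices M_ψ and M_φ. Then A has a Jordan block of size at least 3 for the eigenvalue 1; precisely, there exists a vector v ∈ ℚ^11 such that (A − I)^3 v = 0 and (A − I)^2 v ≠ 0. -/
/-! The class `u = 4h - 2b_t - Σ b_{t,i} - 2c_t - Σ c_{t,i}` is fixed by both involutions, so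
`(A - I) u = 0`, while `(A - I)² h = 4u ≠ 0`: the line class `h` starts a Jordan chain of
length three. -/

namespace Stmt11

def Mphi : Matrix (Fin 11) (Fin 11) ℚ :=
  !![3, 2, 1, 1, 1, 1, 0, 0, 0, 0, 0;
    -2, -1, -1, -1, -1, -1, 0, 0, 0, 0, 0;
    -1, -1, -1, 0, 0, 0, 0, 0, 0, 0, 0;
    -1, -1, 0, -1, 0, 0, 0, 0, 0, 0, 0;
    -1, -1, 0, 0, -1, 0, 0, 0, 0, 0, 0;
    -1, -1, 0, 0, 0, -1, 0, 0, 0, 0, 0;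
    0, 0, 0, 0, 0, 0, 1, 0, 0, 0, 0;
    0, 0, 0, 0, 0, 0, 0, 1, 0, 0, 0;
    0, 0, 0, 0, 0, 0, 0, 0, 1, 0, 0;
    0, 0, 0, 0, 0, 0, 0, 0, 0, 1, 0;
    0, 0, 0, 0, 0, 0, 0, 0, 0, 0, 1]

def Mpsi : Matrix (Fin 11) (Fin 11) ℚ :=
  !![3, 0, 0, 0, 0, 0, 2, 1, 1, 1, 1;
    0, 1, 0, 0, 0, 0, 0, 0, 0, 0, 0;
    0, 0, 1, 0, 0, 0, 0, 0, 0, 0, 0;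
    0, 0, 0, 1, 0, 0, 0, 0, 0, 0, 0;
    0, 0, 0, 0, 1, 0, 0, 0, 0, 0, 0;
    0, 0, 0, 0, 0, 1, 0, 0, 0, 0, 0;
    -2, 0, 0, 0, 0, 0, -1, -1, -1, -1, -1;
    -1, 0, 0, 0, 0, 0, -1, -1, 0, 0, 0;
    -1, 0, 0, 0, 0, 0, -1, 0, -1, 0, 0;
    -1, 0, 0, 0, 0, 0, -1, 0, 0, -1, 0;
    -1, 0, 0, 0, 0, 0, -1, 0, 0, 0, -1]

open Matrix

theorem pow_succ_mulVec {n R : Type*} [Fintype n] [DecidableEq n] [Semiring R]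
    (N : Matrix n n R) (k : ℕ) (v : n → R) : (N ^ (k + 1)) *ᵥ v = N *ᵥ ((N ^ k) *ᵥ v) := by
  rw [pow_succ', mulVec_mulVec]

theorem mul_sub_one_mulVec_eq_iff {n R : Type*} [Fintype n] [DecidableEq n] [Ring R]
    {A B : Matrix n n R} {v w : n → R} : (A * B - 1) *ᵥ v = w ↔ A *ᵥ (B *ᵥ v) = w + v := by
  rw [sub_mulVec, one_mulVec, mulVec_mulVec, sub_eq_iff_eq_add]

def lineClass : Fin 11 → ℚ := ![1, 0, 0, 0, 0, 0, 0, 0, 0, 0, 0]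

def lineClassImage : Fin 11 → ℚ := ![8, -2, -1, -1, -1, -1, -6, -3, -3, -3, -3]

def invariantClass : Fin 11 → ℚ := ![4, -2, -1, -1, -1, -1, -2, -1, -1, -1, -1]

theorem Mphi_mulVec_invariantClass : Mphi *ᵥ invariantClass = invariantClass := by
  norm_num [Mphi, invariantClass, funext_iff, Fin.forall_fin_succ]

theorem Mpsi_mulVec_invariantClass : Mpsi *ᵥ invariantClass = invariantClass := by
  norm_num [Mpsi, invariantClass, funext_iff, Fin.forall_fin_succ]

theorem Mphi_mulVec_lineClass : Mphi *ᵥ lineClass = ![3, -2, -1, -1, -1, -1, 0, 0, 0, 0, 0] := by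
  norm_num [Mphi, lineClass, funext_iff, Fin.forall_fin_succ]

theorem Mphi_mulVec_lineClassImage :
    Mphi *ᵥ lineClassImage = ![16, -10, -5, -5, -5, -5, -6, -3, -3, -3, -3] := by
  norm_num [Mphi, lineClassImage, funext_iff, Fin.forall_fin_succ]

theorem sub_one_mulVec_invariantClass : (Mpsi * Mphi - 1) *ᵥ invariantClass = 0 := by
  rw [mul_sub_one_mulVec_eq_iff, Mphi_mulVec_invariantClass, Mpsi_mulVec_invariantClass, zero_add]

theorem sub_one_mulVec_lineClass : (Mpsi * Mphi - 1) *ᵥ lineClass = lineClassImage := by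
  rw [mul_sub_one_mulVec_eq_iff, Mphi_mulVec_lineClass]
  norm_num [Mpsi, lineClass, lineClassImage, funext_iff, Fin.forall_fin_succ]

theorem sub_one_mulVec_lineClassImage :
    (Mpsi * Mphi - 1) *ᵥ lineClassImage = (4 : ℚ) • invariantClass := by
  rw [mul_sub_one_mulVec_eq_iff, Mphi_mulVec_lineClassImage]
  norm_num [Mpsi, lineClassImage, invariantClass, funext_iff, Fin.forall_fin_succ]

theorem invariantClass_ne_zero : invariantClass ≠ 0 :=
  fun h ↦ by simpa [invariantClass] using congrFun h 0

/-- The product `A = M_ψ · M_φ` has a Jordan block of size at least `3` for the eigenvalue `1`: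
there is a vector `v` with `(A - I)³ v = 0` but `(A - I)² v ≠ 0`. -/
theorem jordan_block_of_size_three :
    ∃ v : Fin 11 → ℚ,
      ((Mpsi * Mphi - 1) ^ 3).mulVec v = 0 ∧ ((Mpsi * Mphi - 1) ^ 2).mulVec v ≠ 0 := by
  have hsq : ((Mpsi * Mphi - 1) ^ 2) *ᵥ lineClass = (4 : ℚ) • invariantClass := by
    rw [pow_succ_mulVec, pow_one, sub_one_mulVec_lineClass, sub_one_mulVec_lineClassImage]
  refine ⟨lineClass, ?_, ?_⟩
  · rw [pow_succ_mulVec, hsq, mulVec_smul, sub_one_mulVec_invariantClass, smul_zero]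
  · rw [hsq]
    exact smul_ne_zero (by norm_num) invariantClass_ne_zero

end Stmt11
end

section
/- Let A = M_ψ · M_φ be the product of the two explicit 11×11 rational matrices M_ψ and M_φ. Then there exist real constants c2 ≥ c1 > 0 such that for every integer n ≥ 1, c1·n^2 ≤ (A^n)_{1,1} ≤ c2·n^2, where (A^n)_{1,1} denotes the top-left entry of A^n. (This entry equals the degree of the n-th iterate of the birational map ι_q ∘ ι_t of ℙ² for generic t, so the degree sequence grows quadratically.) -/
namespace Stmt12

def Mphi : Matrix (Fin 11) (Fin 11) ℚ :=
  !![3, 2, 1, 1, 1, 1, 0, 0, 0, 0, 0;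
    -2, -1, -1, -1, -1, -1, 0, 0, 0, 0, 0;
    -1, -1, -1, 0, 0, 0, 0, 0, 0, 0, 0;
    -1, -1, 0, -1, 0, 0, 0, 0, 0, 0, 0;
    -1, -1, 0, 0, -1, 0, 0, 0, 0, 0, 0;
    -1, -1, 0, 0, 0, -1, 0, 0, 0, 0, 0;
    0, 0, 0, 0, 0, 0, 1, 0, 0, 0, 0;
    0, 0, 0, 0, 0, 0, 0, 1, 0, 0, 0;
    0, 0, 0, 0, 0, 0, 0, 0, 1, 0, 0;
    0, 0, 0, 0, 0, 0, 0, 0, 0, 1, 0;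
    0, 0, 0, 0, 0, 0, 0, 0, 0, 0, 1]

def Mpsi : Matrix (Fin 11) (Fin 11) ℚ :=
  !![3, 0, 0, 0, 0, 0, 2, 1, 1, 1, 1;
    0, 1, 0, 0, 0, 0, 0, 0, 0, 0, 0;
    0, 0, 1, 0, 0, 0, 0, 0, 0, 0, 0;
    0, 0, 0, 1, 0, 0, 0, 0, 0, 0, 0;
    0, 0, 0, 0, 1, 0, 0, 0, 0, 0, 0;
    0, 0, 0, 0, 0, 1, 0, 0, 0, 0, 0;
    -2, 0, 0, 0, 0, 0, -1, -1, -1, -1, -1;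
    -1, 0, 0, 0, 0, 0, -1, -1, 0, 0, 0;
    -1, 0, 0, 0, 0, 0, -1, 0, -1, 0, 0;
    -1, 0, 0, 0, 0, 0, -1, 0, 0, -1, 0;
    -1, 0, 0, 0, 0, 0, -1, 0, 0, 0, -1]

/-!
The orbit of the line class `h = e₀` under `A = M_ψ M_φ` is polynomial of degree 2 in `n`:
guessing it and checking `A vₙ = vₙ₊₁` coordinatewise gives `(Aⁿ)₀₀ = 8n² + 1`, which lies
between `8n²` and `9n²`.
-/

open Matrix

theorem pow_mulVec_eq_of_mulVec_eq_succ {ι R : Type*} [Fintype ι] [DecidableEq ι] [Semiring R]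
    (A : Matrix ι ι R) (v : ℕ → ι → R) (hv : ∀ k, A *ᵥ v k = v (k + 1)) (n : ℕ) :
    A ^ n *ᵥ v 0 = v n := by
  induction n with
  | zero => simp
  | succ n ih => rw [pow_succ', ← mulVec_mulVec, ih, hv]

def lineClassOrbit (n : ℕ) : Fin 11 → ℚ :=
  ![8 * n ^ 2 + 1, -4 * n ^ 2 + 2 * n, -2 * n ^ 2 + n, -2 * n ^ 2 + n, -2 * n ^ 2 + n,
    -2 * n ^ 2 + n, -4 * n ^ 2 - 2 * n, -2 * n ^ 2 - n, -2 * n ^ 2 - n, -2 * n ^ 2 - n,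
    -2 * n ^ 2 - n]

theorem lineClassOrbit_zero : lineClassOrbit 0 = Pi.single 0 1 := by
  ext i
  fin_cases i <;> simp [lineClassOrbit]

theorem mulVec_lineClassOrbit (n : ℕ) :
    (Mpsi * Mphi) *ᵥ lineClassOrbit n = lineClassOrbit (n + 1) := by
  rw [← mulVec_mulVec]
  ext i
  fin_cases i <;>
    · simp [Mpsi, Mphi, lineClassOrbit, mulVec, dotProduct, Fin.sum_univ_succ]
      ring

theorem Mpsi_mul_Mphi_pow_apply_zero_zero (n : ℕ) :
    ((Mpsi * Mphi) ^ n) 0 0 = 8 * (n : ℚ) ^ 2 + 1 := by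
  have h := pow_mulVec_eq_of_mulVec_eq_succ _ _ mulVec_lineClassOrbit n
  rw [lineClassOrbit_zero, mulVec_single_one] at h
  exact congrFun h 0

/-- The top-left entry of `(M_ψ · M_φ)ⁿ`, which is the degree of the `n`-th iterate of the
birational map `ι_q ∘ ι_t` of `ℙ²` for generic `t`, grows quadratically in `n`. -/
theorem quadratic_degree_growth :
    ∃ c₁ c₂ : ℝ, 0 < c₁ ∧ c₁ ≤ c₂ ∧
      ∀ n : ℕ, 1 ≤ n →
        c₁ * (n : ℝ) ^ 2 ≤ ((((Mpsi * Mphi) ^ n) 0 0 : ℚ) : ℝ) ∧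
        ((((Mpsi * Mphi) ^ n) 0 0 : ℚ) : ℝ) ≤ c₂ * (n : ℝ) ^ 2 := by
  refine ⟨8, 9, by norm_num, by norm_num, fun n hn => ?_⟩
  have hn2 : (1 : ℝ) ≤ (n : ℝ) ^ 2 := one_le_pow₀ (by exact_mod_cast hn)
  rw [Mpsi_mul_Mphi_pow_apply_zero_zero]
  push_cast
  constructor <;> linarith

end Stmt12
end

section
/- Let M be the explicit 11×11 rational matrix representing the action of the lift of the birational map Φ on the Néron–Severi group of the twice-blown-up plane. Then M has a Jordan block of size at least 3 for the eigenvalue 1; precisely, there exists a vector v ∈ ℚ^11 such that (M − I)^3 v = 0 and (M − I)^2 v ≠ 0. -/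
/-! The class `h` of a line starts a Jordan chain of `M - 1`:
`h ↦ (M - 1) h ↦ (M - 1)² h = 2 (4h - 2e_p - ∑ e_{pᵢ} - 2e_{p'} - 2 ∑ e_{pᵢ'}) ↦ 0`. -/

namespace Stmt13

def M : Matrix (Fin 11) (Fin 11) ℚ :=
  !![5, 4, 0, 0, 0, 0, 0, 1, 1, 1, 1;
    0, 0, 0, 0, 0, 0, 1, 0, 0, 0, 0;
    -1, -1, 1, 0, 0, 0, 0, -1, 0, 0, 0;
    -1, -1, 0, 1, 0, 0, 0, 0, -1, 0, 0;
    -1, -1, 0, 0, 1, 0, 0, 0, 0, -1, 0;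
    -1, -1, 0, 0, 0, 1, 0, 0, 0, 0, -1;
    -4, -3, 0, 0, 0, 0, 0, -1, -1, -1, -1;
    -2, -2, 0, 0, 0, 0, 0, -1, 0, 0, 0;
    -2, -2, 0, 0, 0, 0, 0, 0, -1, 0, 0;
    -2, -2, 0, 0, 0, 0, 0, 0, 0, -1, 0;
    -2, -2, 0, 0, 0, 0, 0, 0, 0, 0, -1]

open Matrix

theorem _root_.Matrix.pow_succ_mulVec {R n : Type*} [Semiring R] [Fintype n] [DecidableEq n]
    (N : Matrix n n R) (k : ℕ) (v : n → R) : (N ^ (k + 1)) *ᵥ v = (N ^ k) *ᵥ (N *ᵥ v) := by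
  rw [pow_succ, mulVec_mulVec]

theorem _root_.Matrix.sub_one_mulVec_of_mulVec_eq_add {R n : Type*} [Ring R] [Fintype n]
    [DecidableEq n] {N : Matrix n n R} {v w : n → R} (h : N *ᵥ v = v + w) :
    (N - 1) *ᵥ v = w := by
  rw [sub_mulVec, one_mulVec, h, add_sub_cancel_left]

theorem M_mulVec_h :
    M *ᵥ ![1, 0, 0, 0, 0, 0, 0, 0, 0, 0, 0] =
      ![1, 0, 0, 0, 0, 0, 0, 0, 0, 0, 0] + ![4, 0, -1, -1, -1, -1, -4, -2, -2, -2, -2] := by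
  ext i; fin_cases i <;> norm_num [M, mulVec, dotProduct, Fin.sum_univ_succ]

theorem M_mulVec_M_sub_one_h :
    M *ᵥ ![4, 0, -1, -1, -1, -1, -4, -2, -2, -2, -2] =
      ![4, 0, -1, -1, -1, -1, -4, -2, -2, -2, -2] +
        ![8, -4, -2, -2, -2, -2, -4, -4, -4, -4, -4] := by
  ext i; fin_cases i <;> norm_num [M, mulVec, dotProduct, Fin.sum_univ_succ]

theorem M_mulVec_M_sub_one_sq_h :
    M *ᵥ ![8, -4, -2, -2, -2, -2, -4, -4, -4, -4, -4] =
      ![8, -4, -2, -2, -2, -2, -4, -4, -4, -4, -4] := by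
  ext i; fin_cases i <;> norm_num [M, mulVec, dotProduct, Fin.sum_univ_succ]

/-- The matrix `M` representing the action of the regularized lift of `Φ` on the Néron–Severi
group of the twice-blown-up plane has a Jordan block of size at least `3` for the eigenvalue `1`:
there is a vector `v` with `(M - I)³ v = 0` but `(M - I)² v ≠ 0`. -/
theorem jordan_block_of_size_three :
    ∃ v : Fin 11 → ℚ,
      ((M - 1) ^ 3).mulVec v = 0 ∧ ((M - 1) ^ 2).mulVec v ≠ 0 := by
  have h₁ := sub_one_mulVec_of_mulVec_eq_add M_mulVec_h
  have h₂ := sub_one_mulVec_of_mulVec_eq_add M_mulVec_M_sub_one_h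
  have h₃ := sub_one_mulVec_of_mulVec_eq_add (M_mulVec_M_sub_one_sq_h.trans (add_zero _).symm)
  refine ⟨![1, 0, 0, 0, 0, 0, 0, 0, 0, 0, 0], ?_, ?_⟩
  · rw [pow_succ_mulVec, pow_succ_mulVec, pow_one, h₁, h₂, h₃]
  · rw [pow_succ_mulVec, pow_one, h₁, h₂]
    intro h
    simpa using congrFun h 0

end Stmt13
end

section
/- Let M be the explicit 11×11 rational matrix representing the action of the lift of the birational map Φ on the Néron–Severi group of the twice-blown-up plane. Then there exist real constants c2 ≥ c1 > 0 such that for every integer n ≥ 1, c1·n^2 ≤ (M^n)_{1,1} ≤ c2·n^2, where (M^n)_{1,1} denotes the top-left entry of M^n. (This entry equals deg(Φ^n), so the degree sequence of Φ grows quadratically.) -/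
namespace Stmt14

def M : Matrix (Fin 11) (Fin 11) ℚ :=
  !![5, 4, 0, 0, 0, 0, 0, 1, 1, 1, 1;
    0, 0, 0, 0, 0, 0, 1, 0, 0, 0, 0;
    -1, -1, 1, 0, 0, 0, 0, -1, 0, 0, 0;
    -1, -1, 0, 1, 0, 0, 0, 0, -1, 0, 0;
    -1, -1, 0, 0, 1, 0, 0, 0, 0, -1, 0;
    -1, -1, 0, 0, 0, 1, 0, 0, 0, 0, -1;
    -4, -3, 0, 0, 0, 0, 0, -1, -1, -1, -1;
    -2, -2, 0, 0, 0, 0, 0, -1, 0, 0, 0;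
    -2, -2, 0, 0, 0, 0, 0, 0, -1, 0, 0;
    -2, -2, 0, 0, 0, 0, 0, 0, 0, -1, 0;
    -2, -2, 0, 0, 0, 0, 0, 0, 0, 0, -1]

lemma v5 (a0 a1 a2 a3 a4 a5 a6 a7 a8 a9 a10 : ℚ) :
    ![a0,a1,a2,a3,a4,a5,a6,a7,a8,a9,a10] (5:Fin 11) = a5 := rfl

lemma v6 (a0 a1 a2 a3 a4 a5 a6 a7 a8 a9 a10 : ℚ) :
    ![a0,a1,a2,a3,a4,a5,a6,a7,a8,a9,a10] (6:Fin 11) = a6 := rfl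

lemma v7 (a0 a1 a2 a3 a4 a5 a6 a7 a8 a9 a10 : ℚ) :
    ![a0,a1,a2,a3,a4,a5,a6,a7,a8,a9,a10] (7:Fin 11) = a7 := rfl

lemma v8 (a0 a1 a2 a3 a4 a5 a6 a7 a8 a9 a10 : ℚ) :
    ![a0,a1,a2,a3,a4,a5,a6,a7,a8,a9,a10] (8:Fin 11) = a8 := rfl

lemma v9 (a0 a1 a2 a3 a4 a5 a6 a7 a8 a9 a10 : ℚ) :
    ![a0,a1,a2,a3,a4,a5,a6,a7,a8,a9,a10] (9:Fin 11) = a9 := rfl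

lemma v10 (a0 a1 a2 a3 a4 a5 a6 a7 a8 a9 a10 : ℚ) :
    ![a0,a1,a2,a3,a4,a5,a6,a7,a8,a9,a10] (10:Fin 11) = a10 := rfl

lemma row (n : ℕ) (hn : 1 ≤ n) :
    (M ^ n) 0 = ![4*(n:ℚ)^2+1, 2*(n:ℚ)^2+2*n, 0, 0, 0, 0,
      2*(n:ℚ)^2-2*n, (n:ℚ)^2, (n:ℚ)^2, (n:ℚ)^2, (n:ℚ)^2] := by
  induction n with
  | zero => omega
  | succ n ih =>
    rcases Nat.eq_zero_or_pos n with h0 | h1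
    · subst h0
      funext j
      rw [pow_one]
      fin_cases j <;> norm_num [M]
    · have h := ih h1
      rw [pow_succ]
      funext j
      rw [Matrix.mul_apply]
      simp only [h]
      fin_cases j <;>
        simp [Fin.sum_univ_succ, M, v5, v6, v7, v8, v9, v10] <;>
        push_cast <;> ring

lemma key (n : ℕ) (hn : 1 ≤ n) : (M ^ n) 0 0 = 4*(n:ℚ)^2+1 := by
  rw [row n hn]; rfl

/-- The top-left entry of `Mⁿ`, which equals `deg(Φⁿ)`, grows quadratically in `n`. -/
theorem quadratic_degree_growth :
    ∃ c₁ c₂ : ℝ, 0 < c₁ ∧ c₁ ≤ c₂ ∧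
      ∀ n : ℕ, 1 ≤ n →
        c₁ * (n : ℝ) ^ 2 ≤ (((M ^ n) 0 0 : ℚ) : ℝ) ∧
        (((M ^ n) 0 0 : ℚ) : ℝ) ≤ c₂ * (n : ℝ) ^ 2 := by
  refine ⟨4, 5, by norm_num, by norm_num, fun n hn => ?_⟩
  have h := key n hn
  rw [h]
  push_cast
  have h1 : (1:ℝ) ≤ (n:ℝ)^2 := by
    have : (1:ℝ) ≤ (n:ℝ) := by exact_mod_cast hn
    nlinarith
  constructor <;> nlinarith

end Stmt14
end

section
/- Let A = M_Ψ · M_Φ be the product of the two explicit 16×16 rational matrices M_Ψ and M_Φ. Then the spectral radius of A equals 16; precisely, (i) 16 is an eigenvalue of A (there is a nonzero v ∈ ℚ^16 with A v = 16 v), and (ii) every complex eigenvalue μ of A satisfies |μ| ≤ 16. (Consequently the induced birational map Ψ ∘ Φ, which is algebraically stable on the corresponding blow-up, has first dynamical degree λ = 16.) -/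
namespace Stmt17

def MPhi : Matrix (Fin 16) (Fin 16) ℚ :=
  !![5, 4, 0, 0, 0, 0, 0, 1, 1, 1, 1, 0, 0, 0, 0, 0;
    0, 0, 0, 0, 0, 0, 1, 0, 0, 0, 0, 0, 0, 0, 0, 0;
    -1, -1, 1, 0, 0, 0, 0, -1, 0, 0, 0, 0, 0, 0, 0, 0;
    -1, -1, 0, 1, 0, 0, 0, 0, -1, 0, 0, 0, 0, 0, 0, 0;
    -1, -1, 0, 0, 1, 0, 0, 0, 0, -1, 0, 0, 0, 0, 0, 0;
    -1, -1, 0, 0, 0, 1, 0, 0, 0, 0, -1, 0, 0, 0, 0, 0;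
    -4, -3, 0, 0, 0, 0, 0, -1, -1, -1, -1, 0, 0, 0, 0, 0;
    -2, -2, 0, 0, 0, 0, 0, -1, 0, 0, 0, 0, 0, 0, 0, 0;
    -2, -2, 0, 0, 0, 0, 0, 0, -1, 0, 0, 0, 0, 0, 0, 0;
    -2, -2, 0, 0, 0, 0, 0, 0, 0, -1, 0, 0, 0, 0, 0, 0;
    -2, -2, 0, 0, 0, 0, 0, 0, 0, 0, -1, 0, 0, 0, 0, 0;
    0, 0, 0, 0, 0, 0, 0, 0, 0, 0, 0, 0, 0, 0, 0, 0;
    -1, -1, 1, 0, 0, 0, 0, -1, 0, 0, 0, 0, 0, 0, 0, 0;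
    -1, -1, 0, 1, 0, 0, 0, 0, -1, 0, 0, 0, 0, 0, 0, 0;
    -1, -1, 0, 0, 1, 0, 0, 0, 0, -1, 0, 0, 0, 0, 0, 0;
    -1, -1, 0, 0, 0, 1, 0, 0, 0, 0, -1, 0, 0, 0, 0, 0]

def MPsi : Matrix (Fin 16) (Fin 16) ℚ :=
  !![5, 4, 0, 0, 0, 0, 0, 0, 0, 0, 0, 0, 1, 1, 1, 1;
    0, 0, 0, 0, 0, 0, 0, 0, 0, 0, 0, 1, 0, 0, 0, 0;
    -1, -1, 1, 0, 0, 0, 0, 0, 0, 0, 0, 0, -1, 0, 0, 0;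
    -1, -1, 0, 1, 0, 0, 0, 0, 0, 0, 0, 0, 0, -1, 0, 0;
    -1, -1, 0, 0, 1, 0, 0, 0, 0, 0, 0, 0, 0, 0, -1, 0;
    -1, -1, 0, 0, 0, 1, 0, 0, 0, 0, 0, 0, 0, 0, 0, -1;
    0, 0, 0, 0, 0, 0, 0, 0, 0, 0, 0, 0, 0, 0, 0, 0;
    -1, -1, 1, 0, 0, 0, 0, 0, 0, 0, 0, 0, -1, 0, 0, 0;
    -1, -1, 0, 1, 0, 0, 0, 0, 0, 0, 0, 0, 0, -1, 0, 0;
    -1, -1, 0, 0, 1, 0, 0, 0, 0, 0, 0, 0, 0, 0, -1, 0;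
    -1, -1, 0, 0, 0, 1, 0, 0, 0, 0, 0, 0, 0, 0, 0, -1;
    -4, -3, 0, 0, 0, 0, 0, 0, 0, 0, 0, 0, -1, -1, -1, -1;
    -2, -2, 0, 0, 0, 0, 0, 0, 0, 0, 0, 0, -1, 0, 0, 0;
    -2, -2, 0, 0, 0, 0, 0, 0, 0, 0, 0, 0, 0, -1, 0, 0;
    -2, -2, 0, 0, 0, 0, 0, 0, 0, 0, 0, 0, 0, 0, -1, 0;
    -2, -2, 0, 0, 0, 0, 0, 0, 0, 0, 0, 0, 0, 0, 0, -1]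


/-!
`A = M_Ψ · M_Φ` is annihilated by `X² (X - 1) (X - 16)`, which a direct computation confirms, so
every eigenvalue of `A` is `0`, `1` or `16`; an explicit rational eigenvector shows that `16`
occurs.
-/

open Matrix Polynomial

section Eigenvalues

variable {R n : Type*} [CommRing R] [Fintype n] [DecidableEq n]

theorem aeval_mulVec_of_mulVec_eq_smul {A : Matrix n n R} {μ : R} {v : n → R}
    (h : A *ᵥ v = μ • v) (p : R[X]) : aeval A p *ᵥ v = p.eval μ • v := by
  have hlin : toLinAlgEquiv' A v = μ • v := by rwa [toLinAlgEquiv'_apply]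
  rw [← toLinAlgEquiv'_apply, ← aeval_algHom_apply]
  exact Module.End.aeval_apply_of_mem_apply_eq_smul hlin

theorem isRoot_of_aeval_eq_zero_of_mulVec_eq_smul [IsDomain R] {A : Matrix n n R} {p : R[X]}
    (hp : aeval A p = 0) {μ : R} {v : n → R} (hv : v ≠ 0) (h : A *ᵥ v = μ • v) :
    p.IsRoot μ := by
  have hpv := aeval_mulVec_of_mulVec_eq_smul h p
  rw [hp, zero_mulVec, eq_comm, smul_eq_zero] at hpv
  exact hpv.resolve_right hv

end Eigenvalues

theorem mulVec_eigenvector_sixteen :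
    (MPsi * MPhi) *ᵥ ![-16, 0, 4, 4, 4, 4, 0, 4, 4, 4, 4, 12, 7, 7, 7, 7] =
      (16 : ℚ) • ![-16, 0, 4, 4, 4, 4, 0, 4, 4, 4, 4, 12, 7, 7, 7, 7] := by
  decide +kernel

theorem MPsi_mul_MPhi_annihilated :
    (MPsi * MPhi) ^ 2 * (MPsi * MPhi - 1) * (MPsi * MPhi - 16) = 0 := by
  decide +kernel

theorem aeval_map_MPsi_mul_MPhi :
    aeval ((MPsi * MPhi).map ((↑) : ℚ → ℂ)) (X ^ 2 * (X - 1) * (X - 16) : ℂ[X]) = 0 := by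
  have h := congrArg (Rat.castHom ℂ).mapMatrix MPsi_mul_MPhi_annihilated
  generalize MPsi * MPhi = A at h ⊢
  simp only [map_mul, map_pow, map_sub, map_one, map_ofNat, map_zero,
    RingHom.mapMatrix_apply, Rat.coe_castHom] at h
  simpa only [map_mul, map_pow, map_sub, map_one, map_ofNat, aeval_X] using h

/-- The spectral radius of `A = M_Ψ · M_Φ` equals `16`: (i) `16` is an eigenvalue of `A`,
and (ii) every complex eigenvalue `μ` of `A` satisfies `|μ| ≤ 16`. Consequently the induced
birational self-map `Ψ ∘ Φ` of the exceptional divisor, which is algebraically stable on the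
corresponding blow-up, has first dynamical degree `λ = 16`. -/
theorem spectral_radius_eq_sixteen :
    (∃ v : Fin 16 → ℚ, v ≠ 0 ∧ (MPsi * MPhi).mulVec v = (16 : ℚ) • v) ∧
    (∀ μ : ℂ, ∀ v : Fin 16 → ℂ, v ≠ 0 →
      ((MPsi * MPhi).map ((↑) : ℚ → ℂ)).mulVec v = μ • v → ‖μ‖ ≤ 16) := by
  refine ⟨⟨_, fun h ↦ by simpa using congrFun h 0, mulVec_eigenvector_sixteen⟩, ?_⟩
  intro μ v hv h
  have hroot := isRoot_of_aeval_eq_zero_of_mulVec_eq_smul aeval_map_MPsi_mul_MPhi hv h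
  simp only [IsRoot, eval_mul, eval_pow, eval_sub, eval_X, eval_one, eval_ofNat, mul_eq_zero,
    pow_eq_zero_iff two_ne_zero, sub_eq_zero] at hroot
  rcases hroot with (rfl | rfl) | rfl <;> norm_num

end Stmt17
end

section
/- Let K be a field of characteristic zero and let z, w ∈ K satisfy z ≠ 0, w^2 ≠ 5z^2, w^2 ≠ z^2, and w^2 ≠ 9z^2. Set u = 8z^2/(w^2 − 5z^2), v = 8zw/(w^2 − 5z^2), and r = (25z^4 − 10w^2z^2 + w^4)/(72z^5 − 80w^2z^3 + 8w^4z). Then: (a) v^2 = 5u^2 + 8u (so the point (u, v) lies on the affine conic 𝔮 : v^2 = 5u^2 + 8u); (b) 8u(9u^4 − 10u^2v^2 + v^4)·r ≠ 0; and (c) ((25u^4 − 10u^2v^2 + v^4)·u)/(8u(9u^4 − 10u^2v^2 + v^4)·r) = z and ((25u^4 − 10u^2v^2 + v^4)·v)/(8u(9u^4 − 10u^2v^2 + v^4)·r) = w. (Equivalently, the displayed formulas for the induced map φ̄ : E_q ⇢ E_𝔮 and its inverse φ̄⁻¹ : E_𝔮 ⇢ E_q are mutually inverse birational maps.) -/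
namespace Stmt18

/-- The displayed formulas for the induced map `φ̄ : E_q ⇢ E_𝔮` and its inverse
`φ̄⁻¹ : E_𝔮 ⇢ E_q` are mutually inverse birational maps: for `(z, w)` in the domain of
definition, the image point `((u, v), r)` lies on the exceptional divisor `E_𝔮 ≅ 𝔮 × 𝔸¹`
over the conic `𝔮 : v² = 5u² + 8u`, the denominator of `φ̄⁻¹` does not vanish there, and
`φ̄⁻¹` sends `((u, v), r)` back to `(z, w)`. -/
theorem phi_bar_inverse {K : Type*} [Field K] [CharZero K] (z w u v r : K)
    (hz : z ≠ 0) (h5 : w ^ 2 ≠ 5 * z ^ 2) (h1 : w ^ 2 ≠ z ^ 2) (h9 : w ^ 2 ≠ 9 * z ^ 2)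
    (hu : u = 8 * z ^ 2 / (w ^ 2 - 5 * z ^ 2))
    (hv : v = 8 * z * w / (w ^ 2 - 5 * z ^ 2))
    (hr : r = (25 * z ^ 4 - 10 * w ^ 2 * z ^ 2 + w ^ 4) /
      (72 * z ^ 5 - 80 * w ^ 2 * z ^ 3 + 8 * w ^ 4 * z)) :
    v ^ 2 = 5 * u ^ 2 + 8 * u ∧
    8 * u * (9 * u ^ 4 - 10 * u ^ 2 * v ^ 2 + v ^ 4) * r ≠ 0 ∧
    ((25 * u ^ 4 - 10 * u ^ 2 * v ^ 2 + v ^ 4) * u) /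
      (8 * u * (9 * u ^ 4 - 10 * u ^ 2 * v ^ 2 + v ^ 4) * r) = z ∧
    ((25 * u ^ 4 - 10 * u ^ 2 * v ^ 2 + v ^ 4) * v) /
      (8 * u * (9 * u ^ 4 - 10 * u ^ 2 * v ^ 2 + v ^ 4) * r) = w := by
  have hd : w ^ 2 - 5 * z ^ 2 ≠ 0 := sub_ne_zero.mpr h5
  have hd1 : w ^ 2 - z ^ 2 ≠ 0 := sub_ne_zero.mpr h1
  have hd9 : w ^ 2 - 9 * z ^ 2 ≠ 0 := sub_ne_zero.mpr h9
  have hden : 72 * z ^ 5 - 80 * w ^ 2 * z ^ 3 + 8 * w ^ 4 * z ≠ 0 := by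
    have h : 72 * z ^ 5 - 80 * w ^ 2 * z ^ 3 + 8 * w ^ 4 * z
        = 8 * z * (w ^ 2 - z ^ 2) * (w ^ 2 - 9 * z ^ 2) := by ring
    rw [h]
    exact mul_ne_zero (mul_ne_zero (mul_ne_zero (by norm_num) hz) hd1) hd9
  -- key clearing identities
  have hud : u * (w ^ 2 - 5 * z ^ 2) = 8 * z ^ 2 := by
    rw [hu]; exact div_mul_cancel₀ _ hd
  have hvd : v * (w ^ 2 - 5 * z ^ 2) = 8 * z * w := by
    rw [hv]; exact div_mul_cancel₀ _ hd
  have hre : r * (72 * z ^ 5 - 80 * w ^ 2 * z ^ 3 + 8 * w ^ 4 * z)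
      = (w ^ 2 - 5 * z ^ 2) ^ 2 := by
    rw [hr, div_mul_cancel₀ _ hden]; ring
  have hrne : r ≠ 0 := by
    intro h
    rw [h, zero_mul] at hre
    exact (pow_ne_zero 2 hd) hre.symm
  have hune : u ≠ 0 := by
    rw [hu]
    exact div_ne_zero (by simpa using pow_ne_zero 2 hz) hd
  -- 9u⁴ - 10u²v² + v⁴ is nonzero
  have hFd : (9 * u ^ 4 - 10 * u ^ 2 * v ^ 2 + v ^ 4) * (w ^ 2 - 5 * z ^ 2) ^ 4
      = 4096 * z ^ 4 * (w ^ 2 - z ^ 2) * (w ^ 2 - 9 * z ^ 2) := by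
    have h : (9 * u ^ 4 - 10 * u ^ 2 * v ^ 2 + v ^ 4) * (w ^ 2 - 5 * z ^ 2) ^ 4
        = 9 * (u * (w ^ 2 - 5 * z ^ 2)) ^ 4
          - 10 * (u * (w ^ 2 - 5 * z ^ 2)) ^ 2 * (v * (w ^ 2 - 5 * z ^ 2)) ^ 2
          + (v * (w ^ 2 - 5 * z ^ 2)) ^ 4 := by ring
    rw [h, hud, hvd]; ring
  have hfne : 9 * u ^ 4 - 10 * u ^ 2 * v ^ 2 + v ^ 4 ≠ 0 := by
    intro h
    rw [h, zero_mul] at hFd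
    have : (4096 : K) * z ^ 4 * (w ^ 2 - z ^ 2) * (w ^ 2 - 9 * z ^ 2) ≠ 0 :=
      mul_ne_zero (mul_ne_zero (mul_ne_zero (by norm_num) (pow_ne_zero 4 hz)) hd1) hd9
    exact this hFd.symm
  have hB : 8 * u * (9 * u ^ 4 - 10 * u ^ 2 * v ^ 2 + v ^ 4) * r ≠ 0 :=
    mul_ne_zero (mul_ne_zero (mul_ne_zero (by norm_num) hune) hfne) hrne
  have hcancel : (w ^ 2 - 5 * z ^ 2) ^ 5 * (72 * z ^ 5 - 80 * w ^ 2 * z ^ 3 + 8 * w ^ 4 * z) ≠ 0 :=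
    mul_ne_zero (pow_ne_zero 5 hd) hden
  refine ⟨?_, hB, ?_, ?_⟩
  · -- v² = 5u² + 8u
    have h2 := pow_ne_zero 2 hd
    apply mul_right_cancel₀ h2
    have hL : v ^ 2 * (w ^ 2 - 5 * z ^ 2) ^ 2 = (v * (w ^ 2 - 5 * z ^ 2)) ^ 2 := by ring
    have hR : (5 * u ^ 2 + 8 * u) * (w ^ 2 - 5 * z ^ 2) ^ 2
        = 5 * (u * (w ^ 2 - 5 * z ^ 2)) ^ 2
          + 8 * (u * (w ^ 2 - 5 * z ^ 2)) * (w ^ 2 - 5 * z ^ 2) := by ring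
    rw [hL, hR, hud, hvd]; ring
  · rw [div_eq_iff hB]
    apply mul_right_cancel₀ hcancel
    have hL : (25 * u ^ 4 - 10 * u ^ 2 * v ^ 2 + v ^ 4) * u *
          ((w ^ 2 - 5 * z ^ 2) ^ 5 * (72 * z ^ 5 - 80 * w ^ 2 * z ^ 3 + 8 * w ^ 4 * z))
        = (25 * (u * (w ^ 2 - 5 * z ^ 2)) ^ 4
            - 10 * (u * (w ^ 2 - 5 * z ^ 2)) ^ 2 * (v * (w ^ 2 - 5 * z ^ 2)) ^ 2
            + (v * (w ^ 2 - 5 * z ^ 2)) ^ 4)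
          * ((u * (w ^ 2 - 5 * z ^ 2)) * (72 * z ^ 5 - 80 * w ^ 2 * z ^ 3 + 8 * w ^ 4 * z)) := by
      ring
    have hR : z * (8 * u * (9 * u ^ 4 - 10 * u ^ 2 * v ^ 2 + v ^ 4) * r) *
          ((w ^ 2 - 5 * z ^ 2) ^ 5 * (72 * z ^ 5 - 80 * w ^ 2 * z ^ 3 + 8 * w ^ 4 * z))
        = z * 8 * (u * (w ^ 2 - 5 * z ^ 2))
          * (9 * (u * (w ^ 2 - 5 * z ^ 2)) ^ 4
              - 10 * (u * (w ^ 2 - 5 * z ^ 2)) ^ 2 * (v * (w ^ 2 - 5 * z ^ 2)) ^ 2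
              + (v * (w ^ 2 - 5 * z ^ 2)) ^ 4)
          * (r * (72 * z ^ 5 - 80 * w ^ 2 * z ^ 3 + 8 * w ^ 4 * z)) := by
      ring
    rw [hL, hR, hud, hvd, hre]; ring
  · rw [div_eq_iff hB]
    apply mul_right_cancel₀ hcancel
    have hL : (25 * u ^ 4 - 10 * u ^ 2 * v ^ 2 + v ^ 4) * v *
          ((w ^ 2 - 5 * z ^ 2) ^ 5 * (72 * z ^ 5 - 80 * w ^ 2 * z ^ 3 + 8 * w ^ 4 * z))
        = (25 * (u * (w ^ 2 - 5 * z ^ 2)) ^ 4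
            - 10 * (u * (w ^ 2 - 5 * z ^ 2)) ^ 2 * (v * (w ^ 2 - 5 * z ^ 2)) ^ 2
            + (v * (w ^ 2 - 5 * z ^ 2)) ^ 4)
          * ((v * (w ^ 2 - 5 * z ^ 2)) * (72 * z ^ 5 - 80 * w ^ 2 * z ^ 3 + 8 * w ^ 4 * z)) := by
      ring
    have hR : w * (8 * u * (9 * u ^ 4 - 10 * u ^ 2 * v ^ 2 + v ^ 4) * r) *
          ((w ^ 2 - 5 * z ^ 2) ^ 5 * (72 * z ^ 5 - 80 * w ^ 2 * z ^ 3 + 8 * w ^ 4 * z))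
        = w * 8 * (u * (w ^ 2 - 5 * z ^ 2))
          * (9 * (u * (w ^ 2 - 5 * z ^ 2)) ^ 4
              - 10 * (u * (w ^ 2 - 5 * z ^ 2)) ^ 2 * (v * (w ^ 2 - 5 * z ^ 2)) ^ 2
              + (v * (w ^ 2 - 5 * z ^ 2)) ^ 4)
          * (r * (72 * z ^ 5 - 80 * w ^ 2 * z ^ 3 + 8 * w ^ 4 * z)) := by
      ring
    rw [hL, hR, hud, hvd, hre]; ring

end Stmt18
end
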